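/- arXiv:2302.00305 — 9 statements merged into one kernel-verified Lean document; each statement's English description precedes it below -/
import Mathlib

section
/- Let R be a range set. A subset K of R is compact in the nearly discrete metric M_R if and only if K is tenuous, i.e., K is finite or K = {0} ∪ {a_i : i ∈ ℕ} for some strictly decreasing sequence a_i → 0 in (0,∞). -/
/-- The nearly discrete ultrametric on `[0,∞)`. -/
noncomputable def MR (x y : ℝ) : ℝ := if x = y then 0 else max x y

/-- A subset of `[0,∞)` is tenuous if it is finite or consists of `0` together
with a strictly decreasing positive sequence converging to `0`. -/
def Tenuous (K : Set ℝ) : Prop :=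
  K.Finite ∨ ∃ a : ℕ → ℝ, StrictAnti a ∧ (∀ i, 0 < a i) ∧
    Filter.Tendsto a Filter.atTop (nhds 0) ∧ K = {0} ∪ Set.range a

open Set Filter Topology

/-! Both compactness and tenuity of `K ⊆ [0,∞)` amount to: `K ∩ [ε,∞)` is finite for every
`ε > 0`, and `0 ∈ K` if `K` is infinite. An `M_R`-convergent sequence with nonzero limit is
eventually constant, so a sequence of distinct points can only converge to `0`, and only if it
eventually drops below every `ε`; conversely a sequence in such a `K` either takes some value
infinitely often or has finite fibres and then converges to `0`. Such a `K` is tenuous because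
`K \ {0}`, having finite upper sets, can be enumerated in decreasing order. -/

theorem Set.Infinite.exists_strictAnti_range_eq {α : Type*} [LinearOrder α] {S : Set α}
    (hS : S.Infinite) (hfin : ∀ x ∈ S, (S ∩ Ici x).Finite) :
    ∃ a : ℕ → α, StrictAnti a ∧ range a = S := by
  have hfin' : ∀ x : S, {y : S | x ≤ y}.Finite := fun x =>
    (hfin x x.2).preimage Subtype.val_injective.injOn |>.subset fun y hy => ⟨y.2, hy⟩
  -- `Sᵒᵈ` is a locally finite linear order with a bottom and no top, hence isomorphic to `ℕ`.
  let : LocallyFiniteOrder Sᵒᵈ := LocallyFiniteOrder.ofFiniteIcc fun _ y =>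
    (hfin' (OrderDual.ofDual y)).subset fun _ hz => hz.2
  let := LinearLocallyFiniteOrder.succOrder Sᵒᵈ
  let := LinearLocallyFiniteOrder.predOrder Sᵒᵈ
  have : NoMaxOrder Sᵒᵈ := ⟨fun x => by
    obtain ⟨y, hyS, hy⟩ := (hS.sdiff (hfin _ (OrderDual.ofDual x).2)).nonempty
    exact ⟨OrderDual.toDual ⟨y, hyS⟩, lt_of_not_ge fun h => hy ⟨hyS, h⟩⟩⟩
  obtain ⟨x₀⟩ := hS.nonempty.to_subtype
  obtain ⟨m, hm, hmax⟩ := (hfin' x₀).exists_maximal ⟨x₀, le_rfl⟩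
  let : OrderBot Sᵒᵈ :=
    { bot := OrderDual.toDual m
      bot_le := fun z => by
        change OrderDual.ofDual z ≤ m
        rcases le_total x₀ (OrderDual.ofDual z) with h | h
        · exact le_of_not_gt fun hlt => hlt.not_ge (hmax h hlt.le)
        · exact h.trans hm }
  let e : Sᵒᵈ ≃o ℕ := orderIsoNatOfLinearSuccPredArch
  refine ⟨fun n => ((OrderDual.ofDual (e.symm n) : S) : α),
    fun _ _ hij => e.symm.strictMono hij, ?_⟩
  ext x
  constructor
  · rintro ⟨n, rfl⟩
    exact (OrderDual.ofDual (e.symm n)).2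
  · intro hx
    exact ⟨e (OrderDual.toDual ⟨x, hx⟩), by simp [OrderDual.ofDual_toDual]⟩

lemma MR_self (x : ℝ) : MR x x = 0 := if_pos rfl

lemma MR_zero_right {x : ℝ} (hx : 0 ≤ x) : MR x 0 = x := by
  by_cases h : x = 0
  · simp [h, MR_self]
  · simp [MR, h, hx]

lemma eq_of_MR_lt_right {x y : ℝ} (h : MR x y < y) : x = y := by
  by_contra hne
  rw [MR, if_neg hne] at h
  exact (le_max_right x y).not_gt h

def MRTendsto (u : ℕ → ℝ) (x : ℝ) : Prop :=
  ∀ ε > (0 : ℝ), ∃ N, ∀ n ≥ N, MR (u n) x < ε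

def IsSeqCompactMR (K : Set ℝ) : Prop :=
  ∀ f : ℕ → ℝ, (∀ n, f n ∈ K) →
    ∃ x ∈ K, ∃ φ : ℕ → ℕ, StrictMono φ ∧ MRTendsto (f ∘ φ) x

lemma mrTendsto_const (x : ℝ) : MRTendsto (fun _ => x) x :=
  fun _ hε => ⟨0, fun _ _ => (MR_self x).symm ▸ hε⟩

lemma mrTendsto_zero_iff {u : ℕ → ℝ} (hu : ∀ n, 0 ≤ u n) :
    MRTendsto u 0 ↔ ∀ ε > 0, {n | ε ≤ u n}.Finite := by
  refine forall₂_congr fun ε _ => ?_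
  simp only [MR_zero_right (hu _)]
  rw [← eventually_atTop, ← Nat.cofinite_eq_atTop, eventually_cofinite]
  simp only [not_lt]

lemma MRTendsto.eventually_eq {u : ℕ → ℝ} {x : ℝ} (h : MRTendsto u x) (hx : 0 < x) :
    ∀ᶠ n in atTop, u n = x := by
  obtain ⟨N, hN⟩ := h x hx
  exact eventually_atTop.2 ⟨N, fun n hn => eq_of_MR_lt_right (hN n hn)⟩

lemma MRTendsto.eq_zero_of_injective {u : ℕ → ℝ} {x : ℝ} (h : MRTendsto u x) (hx : 0 ≤ x)
    (hu : Function.Injective u) : x = 0 := by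
  refine hx.eq_or_lt.elim Eq.symm fun hx => ?_
  obtain ⟨N, hN⟩ := eventually_atTop.1 (h.eventually_eq hx)
  exact absurd (hu ((hN N le_rfl).trans (hN (N + 1) N.le_succ).symm)) (by omega)

section

variable {K : Set ℝ}

lemma IsSeqCompactMR.exists_subseq_tendsto_zero (hK : K ⊆ Ici 0) (h : IsSeqCompactMR K)
    {f : ℕ → ℝ} (hf : Function.Injective f) (hfK : ∀ n, f n ∈ K) :
    0 ∈ K ∧ ∃ φ : ℕ → ℕ, StrictMono φ ∧ MRTendsto (f ∘ φ) 0 := by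
  obtain ⟨x, hx, φ, hφ, hlim⟩ := h f hfK
  obtain rfl := hlim.eq_zero_of_injective (hK hx) (hf.comp hφ.injective)
  exact ⟨hx, φ, hφ, hlim⟩

lemma IsSeqCompactMR.zero_mem (hK : K ⊆ Ici 0) (h : IsSeqCompactMR K) (hinf : K.Infinite) :
    0 ∈ K :=
  let e := hinf.natEmbedding
  (h.exists_subseq_tendsto_zero hK (f := fun n => e n)
    (Subtype.val_injective.comp e.injective) fun n => (e n).2).1

lemma IsSeqCompactMR.finite_inter_Ici (hK : K ⊆ Ici 0) (h : IsSeqCompactMR K) {ε : ℝ}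
    (hε : 0 < ε) : (K ∩ Ici ε).Finite := by
  refine not_infinite.1 fun hinf => ?_
  let e := hinf.natEmbedding
  obtain ⟨-, φ, -, hlim⟩ := h.exists_subseq_tendsto_zero hK (f := fun n => e n)
    (Subtype.val_injective.comp e.injective) fun n => (e n).2.1
  have hfin := (mrTendsto_zero_iff fun n => hK (e (φ n)).2.1).1 hlim ε hε
  exact infinite_univ (hfin.subset fun n _ => (e (φ n)).2.2)

lemma isSeqCompactMR_of_finite_inter_Ici (hK : K ⊆ Ici 0) (hzero : K.Infinite → 0 ∈ K)
    (hfin : ∀ ε > 0, (K ∩ Ici ε).Finite) : IsSeqCompactMR K := by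
  intro f hf
  by_cases hfib : ∃ x ∈ K, (f ⁻¹' {x}).Infinite
  · obtain ⟨x, hx, hinf⟩ := hfib
    refine ⟨x, hx, Nat.nth (f · = x), Nat.nth_strictMono hinf, ?_⟩
    convert mrTendsto_const x using 2 with n
    exact Nat.nth_mem_of_infinite hinf n
  simp only [not_exists, not_and, not_infinite] at hfib
  have hKinf : K.Infinite := fun hKfin =>
    infinite_univ ((hKfin.preimage' hfib).subset fun n _ => hf n)
  refine ⟨0, hzero hKinf, id, strictMono_id, (mrTendsto_zero_iff fun n => hK (hf n)).2 ?_⟩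
  exact fun ε hε =>
    ((hfin ε hε).preimage' fun x hx => hfib x hx.1).subset fun n hn => ⟨hf n, hn⟩

lemma isSeqCompactMR_iff (hK : K ⊆ Ici 0) :
    IsSeqCompactMR K ↔ (K.Infinite → 0 ∈ K) ∧ ∀ ε > 0, (K ∩ Ici ε).Finite :=
  ⟨fun h => ⟨h.zero_mem hK, fun _ hε => h.finite_inter_Ici hK hε⟩,
    fun ⟨hzero, hfin⟩ => isSeqCompactMR_of_finite_inter_Ici hK hzero hfin⟩

lemma tenuous_iff (hK : K ⊆ Ici 0) :
    Tenuous K ↔ (K.Infinite → 0 ∈ K) ∧ ∀ ε > 0, (K ∩ Ici ε).Finite := by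
  constructor
  · rintro (hfin | ⟨a, -, -, ha, rfl⟩)
    · exact ⟨fun h => absurd hfin h, fun _ _ => hfin.subset inter_subset_left⟩
    refine ⟨fun _ => Or.inl rfl, fun ε hε => ?_⟩
    have hlarge : {n | ε ≤ a n}.Finite := by
      have := ha.eventually (gt_mem_nhds hε)
      rw [← Nat.cofinite_eq_atTop, eventually_cofinite] at this
      simpa only [not_lt] using this
    refine (hlarge.image a).subset ?_
    rintro x ⟨rfl | ⟨n, rfl⟩, hx⟩
    · exact absurd hx (not_le.2 hε)
    · exact ⟨n, hx, rfl⟩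
  rintro ⟨hzero, hfin⟩
  refine (em K.Finite).imp id fun (hinf : K.Infinite) => ?_
  have hpos : ∀ x ∈ K \ {0}, 0 < x := fun x hx => (hK hx.1).lt_of_ne (Ne.symm hx.2)
  obtain ⟨a, ha, hrange⟩ := (hinf.sdiff (finite_singleton 0)).exists_strictAnti_range_eq
    fun x hx => (hfin x (hpos x hx)).subset (inter_subset_inter_left _ sdiff_subset)
  have haK : ∀ n, a n ∈ K \ {0} := fun n => hrange ▸ mem_range_self n
  refine ⟨a, ha, fun n => hpos _ (haK n), ?_, ?_⟩
  · refine tendsto_order.2 ⟨fun b hb => Eventually.of_forall fun n => hb.trans (hpos _ (haK n)),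
      fun ε hε => ?_⟩
    rw [← Nat.cofinite_eq_atTop, eventually_cofinite]
    simp only [not_lt]
    exact ((hfin ε hε).preimage ha.injective.injOn).subset fun n hn => ⟨(haK n).1, hn⟩
  · rw [hrange, singleton_union, insert_sdiff_singleton, insert_eq_of_mem (hzero hinf)]

end

theorem stmt_9_general (R : Set ℝ) (hR : R ⊆ Set.Ici (0 : ℝ))
    (K : Set ℝ) (hKR : K ⊆ R) :
    (∀ f : ℕ → ℝ, (∀ n, f n ∈ K) →
      ∃ x ∈ K, ∃ φ : ℕ → ℕ, StrictMono φ ∧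
        ∀ ε > (0 : ℝ), ∃ N, ∀ n ≥ N, MR (f (φ n)) x < ε) ↔
    Tenuous K :=
  (isSeqCompactMR_iff (hKR.trans hR)).trans (tenuous_iff (hKR.trans hR)).symm

/-- A subset `K` of a range set `R` is compact in the nearly discrete metric
`M_R` (equivalently, sequentially compact, since `M_R` is a metric) if and only
if `K` is tenuous. -/
theorem stmt_9 (R : Set ℝ) (hR : R ⊆ Set.Ici (0 : ℝ)) (h0 : (0 : ℝ) ∈ R)
    (K : Set ℝ) (hKR : K ⊆ R) :
    (∀ f : ℕ → ℝ, (∀ n, f n ∈ K) →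
      ∃ x ∈ K, ∃ φ : ℕ → ℕ, StrictMono φ ∧
        ∀ ε > (0 : ℝ), ∃ N, ∀ n ≥ N, MR (f (φ n)) x < ε) ↔
    Tenuous K :=
  stmt_9_general R hR K hKR
end

section
/- Let R be a range set and X a compact topological space. If f: X → R is continuous with respect to the nearly discrete metric M_R on R, then the image f(X) is a tenuous subset of R (finite, or {0} together with a strictly decreasing positive sequence converging to 0). -/
/-- Every nonempty subset of a set of positive reals with the "finitely many above ε"
property has a greatest element. -/
lemma exists_greatest_aux (S : Set ℝ) (hpos : ∀ x ∈ S, 0 < x)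
    (hfin : ∀ ε > (0:ℝ), {x ∈ S | ε ≤ x}.Finite)
    (T : Set ℝ) (hTS : T ⊆ S) (hT : T.Nonempty) :
    ∃ m ∈ T, ∀ x ∈ T, x ≤ m := by
  obtain ⟨t, ht⟩ := hT
  have htpos : 0 < t := hpos t (hTS ht)
  have hF : {x ∈ T | t ≤ x}.Finite :=
    (hfin t htpos).subset (fun x hx => ⟨hTS hx.1, hx.2⟩)
  have hne : hF.toFinset.Nonempty := ⟨t, by rw [Set.Finite.mem_toFinset]; exact ⟨ht, le_refl t⟩⟩
  refine ⟨hF.toFinset.max' hne, ?_, ?_⟩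
  · have := hF.toFinset.max'_mem hne
    rw [Set.Finite.mem_toFinset] at this
    exact this.1
  · intro x hx
    by_cases hxt : t ≤ x
    · exact hF.toFinset.le_max' x (by rw [Set.Finite.mem_toFinset]; exact ⟨hx, hxt⟩)
    · have ht' : t ≤ hF.toFinset.max' hne :=
        hF.toFinset.le_max' t (by rw [Set.Finite.mem_toFinset]; exact ⟨ht, le_refl t⟩)
      exact le_trans (le_of_not_ge hxt) ht'

/-- Enumeration lemma: an infinite set of positive reals with only finitely many
elements above each positive ε can be enumerated by a strictly decreasing
sequence tending to 0. -/
lemma enum_aux (S : Set ℝ) (hpos : ∀ x ∈ S, 0 < x)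
    (hfin : ∀ ε > (0:ℝ), {x ∈ S | ε ≤ x}.Finite) (hinf : S.Infinite) :
    ∃ a : ℕ → ℝ, StrictAnti a ∧ (∀ i, 0 < a i) ∧
      Filter.Tendsto a Filter.atTop (nhds 0) ∧ S = Set.range a := by
  classical
  -- below v: the part of S strictly below v is nonempty whenever v ∈ S
  have hbelow : ∀ v ∈ S, {x ∈ S | x < v}.Nonempty := by
    intro v hv
    have hvpos := hpos v hv
    have hfinv := hfin v hvpos
    obtain ⟨x, hxS, hx⟩ := (hinf.diff hfinv).nonempty
    refine ⟨x, hxS, ?_⟩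
    by_contra h
    exact hx ⟨hxS, le_of_not_gt h⟩
  have key : ∀ v ∈ S, ∃ m ∈ S, m < v ∧ ∀ x ∈ S, x < v → x ≤ m := by
    intro v hv
    obtain ⟨m, hm, hmax⟩ := exists_greatest_aux S hpos hfin {x ∈ S | x < v}
      (fun x hx => hx.1) (hbelow v hv)
    exact ⟨m, hm.1, hm.2, fun x hx hxv => hmax x ⟨hx, hxv⟩⟩
  -- greatest element of S
  obtain ⟨M, hMS, hMmax⟩ := exists_greatest_aux S hpos hfin S (fun _ h => h) hinf.nonempty
  -- next function
  let G : ℝ → ℝ := fun v => if h : v ∈ S then (key v h).choose else 0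
  have hG : ∀ v ∈ S, G v ∈ S ∧ G v < v ∧ ∀ x ∈ S, x < v → x ≤ G v := by
    intro v hv
    have := (key v hv).choose_spec
    simp only [G, dif_pos hv]
    exact ⟨this.1, this.2.1, this.2.2⟩
  let a : ℕ → ℝ := fun n => Nat.rec M (fun _ p => G p) n
  have ha0 : a 0 = M := rfl
  have hasucc : ∀ n, a (n + 1) = G (a n) := fun n => rfl
  have haS : ∀ n, a n ∈ S := by
    intro n
    induction n with
    | zero => exact hMS
    | succ n ih => rw [hasucc]; exact (hG (a n) ih).1
  have hdec : ∀ n, a (n + 1) < a n := by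
    intro n
    rw [hasucc]
    exact (hG (a n) (haS n)).2.1
  have hanti : StrictAnti a := strictAnti_nat_of_succ_lt hdec
  have hapos : ∀ n, 0 < a n := fun n => hpos (a n) (haS n)
  -- every element of S not in range a stays below all a n : impossible
  have hsurj : ∀ s ∈ S, ∃ n, a n = s := by
    intro s hs
    by_contra h
    push_neg at h
    have hle : ∀ n, s ≤ a n := by
      intro n
      induction n with
      | zero => rw [ha0]; exact hMmax s hs
      | succ n ih =>
        have hlt : s < a n := lt_of_le_of_ne ih (fun he => h n he.symm)
        rw [hasucc]
        exact (hG (a n) (haS n)).2.2 s hs hlt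
    have hrsub : Set.range a ⊆ {x ∈ S | s ≤ x} := by
      rintro x ⟨n, rfl⟩
      exact ⟨haS n, hle n⟩
    have : (Set.range a).Finite := (hfin s (hpos s hs)).subset hrsub
    exact (Set.infinite_range_of_injective hanti.injective) this
  have hSeq : S = Set.range a := by
    ext x
    constructor
    · intro hx
      obtain ⟨n, hn⟩ := hsurj x hx
      exact ⟨n, hn⟩
    · rintro ⟨n, rfl⟩
      exact haS n
  -- tendsto 0
  have htend : Filter.Tendsto a Filter.atTop (nhds 0) := by
    rw [Metric.tendsto_atTop]
    intro ε hε
    have hex : ∃ n, a n < ε := by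
      by_contra h
      push_neg at h
      have : Set.range a ⊆ {x ∈ S | ε ≤ x} := by
        rintro x ⟨n, rfl⟩
        exact ⟨haS n, h n⟩
      exact (Set.infinite_range_of_injective hanti.injective)
        ((hfin ε hε).subset this)
    obtain ⟨N, hN⟩ := hex
    refine ⟨N, fun n hn => ?_⟩
    have h1 : a n ≤ a N := hanti.antitone hn
    have h2 : 0 < a n := hapos n
    rw [Real.dist_eq]
    rw [abs_sub_comm, abs_of_nonpos (by linarith)]
    linarith
  exact ⟨a, hanti, hapos, htend, hSeq⟩

theorem stmt_10 {X : Type*} [TopologicalSpace X] [CompactSpace X]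
    (R : Set ℝ) (hR : R ⊆ Set.Ici (0 : ℝ)) (h0 : (0 : ℝ) ∈ R)
    (f : X → ℝ) (hfR : ∀ x, f x ∈ R)
    (hf : ∀ x : X, ∀ ε > (0 : ℝ), ∃ U : Set X, IsOpen U ∧ x ∈ U ∧
      ∀ y ∈ U, MR (f x) (f y) < ε) :
    Tenuous (Set.range f) := by
  classical
  have hnn : ∀ x, (0:ℝ) ≤ f x := fun x => hR (hfR x)
  by_cases hfin : (Set.range f).Finite
  · exact Or.inl hfin
  right
  -- 0 is in the range of f
  have h0r : (0:ℝ) ∈ Set.range f := by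
    by_contra h0r
    apply hfin
    have hx : ∀ x : X, ∃ U : Set X, IsOpen U ∧ x ∈ U ∧ ∀ y ∈ U, f y = f x := by
      intro x
      have hfx : 0 < f x := lt_of_le_of_ne (hnn x) (fun h => h0r ⟨x, h.symm⟩)
      obtain ⟨U, hU, hxU, hd⟩ := hf x (f x) hfx
      refine ⟨U, hU, hxU, fun y hy => ?_⟩
      have hdy := hd y hy
      by_contra hne
      rw [MR, if_neg (fun h => hne h.symm)] at hdy
      exact absurd hdy (not_lt.2 (le_max_left _ _))
    choose U hUo hxU hconst using hx
    obtain ⟨t, ht⟩ := isCompact_univ.elim_finite_subcover U hUo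
      (fun x _ => Set.mem_iUnion.2 ⟨x, hxU x⟩)
    have hsub : Set.range f ⊆ ⋃ i ∈ t, {f i} := by
      rintro v ⟨y, rfl⟩
      obtain ⟨i, hi, hyi⟩ := Set.mem_iUnion₂.1 (ht (Set.mem_univ y))
      exact Set.mem_iUnion₂.2 ⟨i, hi, by simp [hconst i y hyi]⟩
    exact Set.Finite.subset (t.finite_toSet.biUnion fun i _ => Set.finite_singleton _) hsub
  -- finitely many values above ε
  have hFA : ∀ ε > (0:ℝ), {v ∈ Set.range f | ε ≤ v}.Finite := by
    intro ε hε
    have hx : ∀ x : X, ∃ U : Set X, IsOpen U ∧ x ∈ U ∧ ∀ y ∈ U, f y = f x ∨ f y < ε := by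
      intro x
      obtain ⟨U, hU, hxU, hd⟩ := hf x ε hε
      refine ⟨U, hU, hxU, fun y hy => ?_⟩
      have hdy := hd y hy
      by_cases hne : f x = f y
      · exact Or.inl hne.symm
      · rw [MR, if_neg hne] at hdy
        exact Or.inr (lt_of_le_of_lt (le_max_right _ _) hdy)
    choose U hUo hxU hprop using hx
    obtain ⟨t, ht⟩ := isCompact_univ.elim_finite_subcover U hUo
      (fun x _ => Set.mem_iUnion.2 ⟨x, hxU x⟩)
    have hsub : {v ∈ Set.range f | ε ≤ v} ⊆ ⋃ i ∈ t, {f i} := by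
      rintro v ⟨⟨y, rfl⟩, hεv⟩
      obtain ⟨i, hi, hyi⟩ := Set.mem_iUnion₂.1 (ht (Set.mem_univ y))
      rcases hprop i y hyi with h | h
      · exact Set.mem_iUnion₂.2 ⟨i, hi, by simp [h]⟩
      · exact absurd h (not_lt.2 hεv)
    exact Set.Finite.subset (t.finite_toSet.biUnion fun i _ => Set.finite_singleton _) hsub
  -- apply the enumeration lemma to the positive part of the range
  set S : Set ℝ := Set.range f \ {0} with hSdef
  have hSpos : ∀ x ∈ S, 0 < x := by
    rintro x ⟨⟨y, rfl⟩, hx0⟩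
    exact lt_of_le_of_ne (hnn y) (fun h => hx0 h.symm)
  have hSfin : ∀ ε > (0:ℝ), {x ∈ S | ε ≤ x}.Finite := by
    intro ε hε
    exact (hFA ε hε).subset (fun x hx => ⟨hx.1.1, hx.2⟩)
  have hSinf : S.Infinite := by
    intro hSf
    apply hfin
    have : Set.range f ⊆ S ∪ {0} := by
      intro x hx
      by_cases h : x = 0
      · exact Or.inr h
      · exact Or.inl ⟨hx, h⟩
    exact Set.Finite.subset (hSf.union (Set.finite_singleton 0)) this
  obtain ⟨a, h1, h2, h3, h4⟩ := enum_aux S hSpos hSfin hSinf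
  refine ⟨a, h1, h2, h3, ?_⟩
  rw [← h4]
  ext x
  simp only [Set.mem_union, Set.mem_singleton_iff, hSdef, Set.mem_diff]
  constructor
  · intro hx
    by_cases h : x = 0
    · exact Or.inl h
    · exact Or.inr ⟨hx, h⟩
  · rintro (rfl | ⟨hx, _⟩)
    · exact h0r
    · exact hx
end

section
/- Let X be a compact space, R a range set, and f, g: X → R continuous with respect to M_R. Define ∇(f,g) as the infimum of all ε ∈ (0,∞) such that f(x) ≤ max(g(x), ε) and g(x) ≤ max(f(x), ε) for all x ∈ X. Then ∇(f,g) = sup_{x ∈ X} M_R(f(x), g(x)). -/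
lemma MR_bdd {X : Type*} [TopologicalSpace X] [CompactSpace X] (f : X → ℝ)
    (hf : ∀ x : X, ∀ ε > (0 : ℝ), ∃ U : Set X, IsOpen U ∧ x ∈ U ∧
      ∀ y ∈ U, MR (f x) (f y) < ε) :
    ∃ C : ℝ, ∀ x, f x ≤ C := by
  choose U hUo hxU hU using fun x => hf x 1 one_pos
  obtain ⟨t, ht⟩ := IsCompact.elim_finite_subcover isCompact_univ U hUo
    (fun x _ => Set.mem_iUnion.2 ⟨x, hxU x⟩)
  refine ⟨1 + ∑ x ∈ t, |f x|, fun y => ?_⟩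
  obtain ⟨x, hxt, hyU⟩ := Set.mem_iUnion₂.1 (ht (Set.mem_univ y))
  have hlt := hU x y hyU
  have hsum : |f x| ≤ ∑ z ∈ t, |f z| :=
    Finset.single_le_sum (fun z _ => abs_nonneg (f z)) hxt
  unfold MR at hlt
  split_ifs at hlt with h
  · rw [← h]
    have := le_abs_self (f x)
    linarith
  · have : f y ≤ max (f x) (f y) := le_max_right _ _
    have hsum0 : 0 ≤ ∑ z ∈ t, |f z| := Finset.sum_nonneg fun z _ => abs_nonneg _
    linarith

lemma MR_le_iff (a b ε : ℝ) (hε : 0 < ε) :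
    MR a b ≤ ε ↔ (a ≤ max b ε ∧ b ≤ max a ε) := by
  have key : ∀ a b : ℝ, a ≠ b → a ≤ b → b ≤ max a ε → max a b ≤ ε := by
    intro a b hne hab hle
    rcases max_cases a ε with ⟨he, hc⟩ | ⟨he, hc⟩
    · rw [he] at hle
      exact absurd (le_antisymm hab hle) hne
    · rw [he] at hle
      exact max_le (hab.trans hle) hle
  unfold MR
  split_ifs with h
  · subst h
    exact ⟨fun _ => ⟨le_max_left _ _, le_max_left _ _⟩, fun _ => hε.le⟩
  · constructor
    · intro hle
      have ha : a ≤ ε := (le_max_left a b).trans hle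
      have hb : b ≤ ε := (le_max_right a b).trans hle
      exact ⟨ha.trans (le_max_right _ _), hb.trans (le_max_right _ _)⟩
    · rintro ⟨h1, h2⟩
      rcases le_total a b with hab | hba
      · exact key a b h hab h2
      · rw [max_comm]
        exact key b a (Ne.symm h) hba h1

theorem stmt_11 {X : Type*} [TopologicalSpace X] [CompactSpace X]
    (R : Set ℝ) (hR : R ⊆ Set.Ici (0 : ℝ)) (h0 : (0 : ℝ) ∈ R)
    (f g : X → ℝ) (hfR : ∀ x, f x ∈ R) (hgR : ∀ x, g x ∈ R)
    (hf : ∀ x : X, ∀ ε > (0 : ℝ), ∃ U : Set X, IsOpen U ∧ x ∈ U ∧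
      ∀ y ∈ U, MR (f x) (f y) < ε)
    (hg : ∀ x : X, ∀ ε > (0 : ℝ), ∃ U : Set X, IsOpen U ∧ x ∈ U ∧
      ∀ y ∈ U, MR (g x) (g y) < ε) :
    sInf {ε : ℝ | 0 < ε ∧ ∀ x : X, f x ≤ max (g x) ε ∧ g x ≤ max (f x) ε}
      = ⨆ x : X, MR (f x) (g x) := by
  obtain ⟨Cf, hCf⟩ := MR_bdd f hf
  obtain ⟨Cg, hCg⟩ := MR_bdd g hg
  set S := ⨆ x : X, MR (f x) (g x) with hSdef
  have hMR_nonneg : ∀ x, 0 ≤ MR (f x) (g x) := by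
    intro x
    unfold MR
    split_ifs
    · exact le_refl 0
    · exact le_max_of_le_left (hR (hfR x))
  have hbdd : BddAbove (Set.range fun x => MR (f x) (g x)) := by
    refine ⟨max 0 (max Cf Cg), ?_⟩
    rintro _ ⟨x, rfl⟩
    show MR (f x) (g x) ≤ max 0 (max Cf Cg)
    unfold MR
    split_ifs
    · exact le_max_left 0 _
    · exact le_max_of_le_right (max_le_max (hCf x) (hCg x))
  have hS0 : 0 ≤ S := Real.iSup_nonneg hMR_nonneg
  have hset : {ε : ℝ | 0 < ε ∧ ∀ x : X, f x ≤ max (g x) ε ∧ g x ≤ max (f x) ε}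
      = {ε : ℝ | 0 < ε ∧ S ≤ ε} := by
    ext ε
    simp only [Set.mem_setOf_eq, and_congr_right_iff]
    intro hε
    constructor
    · intro h
      exact Real.iSup_le (fun x => (MR_le_iff _ _ _ hε).2 (h x)) hε.le
    · intro h x
      exact (MR_le_iff _ _ _ hε).1 ((le_ciSup hbdd x).trans h)
  rw [hset]
  have hbb : BddBelow {ε : ℝ | 0 < ε ∧ S ≤ ε} := ⟨0, fun ε hε => hε.1.le⟩
  apply le_antisymm
  · apply le_of_forall_pos_le_add
    intro δ hδ
    exact csInf_le hbb ⟨by linarith, by linarith⟩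
  · exact le_csInf ⟨S + 1, by constructor <;> linarith⟩ (fun ε hε => hε.2)
end

section
/- Let X be a nonempty compact space, R a range set, and f, g: X → R continuous with respect to the nearly discrete metric M_R. Then ∇(f,g) is equal to the minimum of all t ∈ [0,∞) such that for all x ∈ X with t < max(f(x), g(x)) one has f(x) = g(x); moreover ∇(f,g) belongs to f(X) ∪ g(X) ∪ {0}, and in particular ∇(f,g) ∈ R. -/
/-- The supremum ultrametric on maps into the nearly discrete space. -/
noncomputable def nabla {X : Type*} (f g : X → ℝ) : ℝ := ⨆ x : X, MR (f x) (g x)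

lemma MR_nonneg {x y : ℝ} (hx : 0 ≤ x) : 0 ≤ MR x y := by
  unfold MR; split
  · exact le_refl 0
  · exact hx.trans (le_max_left x y)

lemma MR_le_max {x y : ℝ} (hx : 0 ≤ x) : MR x y ≤ max x y := by
  unfold MR; split
  · exact hx.trans (le_max_left x y)
  · exact le_rfl

lemma MR_lt_of_lt {x y c : ℝ} (hx : 0 ≤ x) (hxc : x < c) (hyc : y < c) :
    MR x y < c := (MR_le_max hx).trans_lt (max_lt hxc hyc)

lemma usc_exists_max {X : Type*} [TopologicalSpace X] [CompactSpace X] [Nonempty X]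
    (v : X → ℝ)
    (usc : ∀ x : X, ∀ c, v x < c → ∃ U, IsOpen U ∧ x ∈ U ∧ ∀ y ∈ U, v y < c) :
    ∃ x₀, ∀ x, v x ≤ v x₀ := by
  by_contra h
  push_neg at h
  choose w hw using h
  choose U hUo hxU hUlt using fun x => usc x (v (w x)) (hw x)
  have hcover : (Set.univ : Set X) ⊆ ⋃ x, U x := fun x _ => Set.mem_iUnion.2 ⟨x, hxU x⟩
  obtain ⟨t, ht⟩ := isCompact_univ.elim_finite_subcover U hUo hcover
  have htne : t.Nonempty := by
    by_contra hte
    rw [Finset.not_nonempty_iff_eq_empty] at hte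
    have := ht (Set.mem_univ (Classical.arbitrary X))
    simp [hte] at this
  obtain ⟨b, hbt, hb⟩ := t.exists_max_image (fun x => v (w x)) htne
  have hm := ht (Set.mem_univ (w b))
  rw [Set.mem_iUnion₂] at hm
  obtain ⟨a, hat, hwa⟩ := hm
  exact (hb a hat).not_gt (hUlt a (w b) hwa)

theorem stmt_12 {X : Type*} [TopologicalSpace X] [CompactSpace X] [Nonempty X]
    (R : Set ℝ) (hR : R ⊆ Set.Ici (0 : ℝ)) (h0 : (0 : ℝ) ∈ R)
    (f g : X → ℝ) (hfR : ∀ x, f x ∈ R) (hgR : ∀ x, g x ∈ R)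
    (hf : ∀ x : X, ∀ ε > (0 : ℝ), ∃ U : Set X, IsOpen U ∧ x ∈ U ∧
      ∀ y ∈ U, MR (f x) (f y) < ε)
    (hg : ∀ x : X, ∀ ε > (0 : ℝ), ∃ U : Set X, IsOpen U ∧ x ∈ U ∧
      ∀ y ∈ U, MR (g x) (g y) < ε) :
    IsLeast {t : ℝ | 0 ≤ t ∧ ∀ x : X, t < max (f x) (g x) → f x = g x}
        (nabla f g) ∧
    nabla f g ∈ Set.range f ∪ Set.range g ∪ {0} ∧
    nabla f g ∈ R := by
  have hf0 : ∀ x, (0:ℝ) ≤ f x := fun x => hR (hfR x)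
  have hg0 : ∀ x, (0:ℝ) ≤ g x := fun x => hR (hgR x)
  have hv0 : ∀ x, (0:ℝ) ≤ MR (f x) (g x) := fun x => MR_nonneg (hf0 x)
  -- local constancy / smallness of a continuous map
  have loc : ∀ (h : X → ℝ),
      (∀ x : X, ∀ ε > (0:ℝ), ∃ U : Set X, IsOpen U ∧ x ∈ U ∧ ∀ y ∈ U, MR (h x) (h y) < ε) →
      ∀ x : X, ∀ ε > (0:ℝ), ∃ U : Set X, IsOpen U ∧ x ∈ U ∧
        ∀ y ∈ U, h y = h x ∨ (h x < ε ∧ h y < ε) := by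
    intro h hc x ε hε
    obtain ⟨U, hU, hxU, hU2⟩ := hc x ε hε
    refine ⟨U, hU, hxU, fun y hy => ?_⟩
    have hlt := hU2 y hy
    unfold MR at hlt
    split_ifs at hlt with heq
    · exact Or.inl heq.symm
    · exact Or.inr ⟨(le_max_left _ _).trans_lt hlt, (le_max_right _ _).trans_lt hlt⟩
  -- upper semicontinuity of v
  have usc : ∀ x : X, ∀ c, MR (f x) (g x) < c →
      ∃ U : Set X, IsOpen U ∧ x ∈ U ∧ ∀ y ∈ U, MR (f y) (g y) < c := by
    intro x c hc
    have hc0 : (0:ℝ) < c := (hv0 x).trans_lt hc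
    have hε : (0:ℝ) < c/2 := by linarith
    obtain ⟨Uf, hUf, hxf, hf2⟩ := loc f hf x (c/2) hε
    obtain ⟨Ug, hUg, hxg, hg2⟩ := loc g hg x (c/2) hε
    refine ⟨Uf ∩ Ug, hUf.inter hUg, ⟨hxf, hxg⟩, fun y hy => ?_⟩
    rcases hf2 y hy.1 with hfy | ⟨hfx, hfy⟩
    · rcases hg2 y hy.2 with hgy | ⟨hgx, hgy⟩
      · rw [hfy, hgy]; exact hc
      · -- f y = f x, g x and g y are small
        have hfxc : f x < c := by
          rcases lt_or_ge (f x) (c/2) with hsm | hbig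
          · linarith
          · have hne : f x ≠ g x := (hgx.trans_le hbig).ne'
            have hmc : max (f x) (g x) < c := by
              unfold MR at hc; rw [if_neg hne] at hc; exact hc
            exact (le_max_left _ _).trans_lt hmc
        rw [hfy]
        exact MR_lt_of_lt (hf0 x) hfxc (by linarith)
    · rcases hg2 y hy.2 with hgy | ⟨hgx, hgy⟩
      · have hgxc : g x < c := by
          rcases lt_or_ge (g x) (c/2) with hsm | hbig
          · linarith
          · have hne : f x ≠ g x := (hfx.trans_le hbig).ne
            have hmc : max (f x) (g x) < c := by
              unfold MR at hc; rw [if_neg hne] at hc; exact hc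
            exact (le_max_right _ _).trans_lt hmc
        rw [hgy]
        exact MR_lt_of_lt (hf0 y) (by linarith) hgxc
      · exact MR_lt_of_lt (hf0 y) (by linarith) (by linarith)
  obtain ⟨x₀, hmax⟩ := usc_exists_max (fun x => MR (f x) (g x)) usc
  have hbdd : BddAbove (Set.range fun x => MR (f x) (g x)) :=
    ⟨MR (f x₀) (g x₀), Set.forall_mem_range.2 hmax⟩
  have hnab : nabla f g = MR (f x₀) (g x₀) :=
    le_antisymm (ciSup_le hmax) (le_ciSup hbdd x₀)
  constructor
  · constructor
    · constructor
      · rw [hnab]; exact hv0 x₀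
      · intro x hx
        by_contra hne
        have h1 : MR (f x) (g x) = max (f x) (g x) := if_neg hne
        have h2 : MR (f x) (g x) ≤ nabla f g := hnab ▸ hmax x
        rw [h1] at h2
        exact absurd hx (not_lt.2 h2)
    · intro t ht
      rw [hnab]
      rcases eq_or_ne (f x₀) (g x₀) with heq | hne
      · rw [MR, if_pos heq]; exact ht.1
      · rw [MR, if_neg hne]
        by_contra hlt
        exact hne (ht.2 x₀ (not_le.1 hlt))
  · rcases eq_or_ne (f x₀) (g x₀) with heq | hne
    · have h0' : nabla f g = 0 := by rw [hnab, MR, if_pos heq]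
      exact ⟨Or.inr (h0' ▸ rfl), h0' ▸ h0⟩
    · have hm : nabla f g = max (f x₀) (g x₀) := by rw [hnab, MR, if_neg hne]
      rcases max_choice (f x₀) (g x₀) with hc | hc
      · exact ⟨Or.inl (Or.inl ⟨x₀, by rw [hm, hc]⟩), by rw [hm, hc]; exact hfR x₀⟩
      · exact ⟨Or.inl (Or.inr ⟨x₀, by rw [hm, hc]⟩), by rw [hm, hc]; exact hgR x₀⟩
end

section
/- Let X be a compact space and R a range set. If f: X → R is continuous with respect to M_R and 0 ∉ f(X), and l = min f(X), then the open ball U(f, l) in (C(X,(R,M_R)), ∇) equals {f}; in particular f is an isolated point of the function space. -/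
lemma mr_bdd {X : Type*} [TopologicalSpace X] [CompactSpace X]
    (h : X → ℝ) (hnn : ∀ x, 0 ≤ h x)
    (hc : ∀ x : X, ∀ ε > (0 : ℝ), ∃ U : Set X, IsOpen U ∧ x ∈ U ∧
      ∀ y ∈ U, MR (h x) (h y) < ε) :
    ∃ C, ∀ x, h x ≤ C := by
  choose U hUo hUx hU using fun x => hc x (h x + 1) (by linarith [hnn x])
  obtain ⟨t, ht⟩ := isCompact_univ.elim_finite_subcover U hUo
    (fun x _ => Set.mem_iUnion.2 ⟨x, hUx x⟩)
  rcases isEmpty_or_nonempty X with hX | hX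
  · exact ⟨0, fun x => (IsEmpty.false x).elim⟩
  have htne : t.Nonempty := by
    obtain ⟨x⟩ := hX
    obtain ⟨i, hi, _⟩ := Set.mem_iUnion₂.1 (ht (Set.mem_univ x))
    exact ⟨i, hi⟩
  refine ⟨t.sup' htne (fun i => h i + 1), fun x => ?_⟩
  obtain ⟨i, hi, hxi⟩ := Set.mem_iUnion₂.1 (ht (Set.mem_univ x))
  have := hU i x hxi
  have hle : h x ≤ h i + 1 := by
    unfold MR at this
    split_ifs at this with he
    · linarith [he ▸ le_refl (h i)]
    · have := le_of_lt (lt_of_le_of_lt (le_max_right (h i) (h x)) this)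
      linarith
  exact hle.trans (Finset.le_sup' (fun i => h i + 1) hi)

theorem stmt_13 {X : Type*} [TopologicalSpace X] [CompactSpace X]
    (R : Set ℝ) (hR : R ⊆ Set.Ici (0 : ℝ)) (h0 : (0 : ℝ) ∈ R)
    (f : X → ℝ) (hfR : ∀ x, f x ∈ R)
    (hf : ∀ x : X, ∀ ε > (0 : ℝ), ∃ U : Set X, IsOpen U ∧ x ∈ U ∧
      ∀ y ∈ U, MR (f x) (f y) < ε)
    (h0f : (0 : ℝ) ∉ Set.range f)
    (l : ℝ) (hl : IsLeast (Set.range f) l) :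
    ∀ g : X → ℝ, (∀ x, g x ∈ R) →
      (∀ x : X, ∀ ε > (0 : ℝ), ∃ U : Set X, IsOpen U ∧ x ∈ U ∧
        ∀ y ∈ U, MR (g x) (g y) < ε) →
      nabla f g < l → g = f := by
  intro g hgR hg hlt
  obtain ⟨Cf, hCf⟩ := mr_bdd f (fun x => hR (hfR x)) hf
  obtain ⟨Cg, hCg⟩ := mr_bdd g (fun x => hR (hgR x)) hg
  have hbdd : BddAbove (Set.range fun x => MR (f x) (g x)) := by
    refine ⟨max Cf Cg, fun v ⟨x, hx⟩ => ?_⟩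
    subst hx
    show (if f x = g x then 0 else max (f x) (g x)) ≤ max Cf Cg
    split_ifs with he
    · have hx0 : (0:ℝ) ≤ Cf := le_trans (hR (hfR x)) (hCf x)
      exact le_trans hx0 (le_max_left _ _)
    · exact max_le_max (hCf x) (hCg x)
  funext x
  by_contra hne
  have h1 : MR (f x) (g x) ≤ nabla f g := le_ciSup hbdd x
  have h2 : l ≤ f x := hl.2 ⟨x, rfl⟩
  have h3 : MR (f x) (g x) = max (f x) (g x) := by
    unfold MR; rw [if_neg (fun h => hne h.symm)]
  have : f x ≤ nabla f g := le_trans (le_max_left _ _) (h3 ▸ h1)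
  linarith
end

section
/- Let X be a topological space, R a range set, and d: X × X → R a continuous pseudo-ultrametric on X (continuous with respect to the product topology on X² and the Euclidean topology on R). Then d: X² → R is continuous when R is endowed with the nearly discrete metric M_R. -/
theorem stmt_15 {X : Type*} [TopologicalSpace X]
    (R : Set ℝ) (hR : R ⊆ Set.Ici (0 : ℝ)) (h0 : (0 : ℝ) ∈ R)
    (d : X → X → ℝ)
    (hdR : ∀ x y, d x y ∈ R)
    (h_refl : ∀ x, d x x = 0)
    (h_symm : ∀ x y, d x y = d y x)
    (h_ultra : ∀ x y z, d x y ≤ max (d x z) (d z y))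
    (h_cont : Continuous (fun p : X × X => d p.1 p.2)) :
    ∀ p : X × X, ∀ ε > (0 : ℝ), ∃ U : Set (X × X), IsOpen U ∧ p ∈ U ∧
      ∀ q ∈ U, MR (d p.1 p.2) (d q.1 q.2) < ε := by
  have hnn : ∀ x y, 0 ≤ d x y := fun x y => hR (hdR x y)
  have key : ∀ x1 x2 y1 y2 : X,
      MR (d x1 x2) (d y1 y2) ≤ max (d x1 y1) (d x2 y2) := by
    intro x1 x2 y1 y2
    unfold MR
    split
    · exact le_max_of_le_left (hnn x1 y1)
    · rename_i h
      rcases lt_or_gt_of_ne h with h1 | h1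
      · rw [max_eq_right h1.le]
        have hb : d y1 y2 ≤ max (d y1 x1) (max (d x1 x2) (d x2 y2)) :=
          (h_ultra y1 y2 x1).trans (max_le_max le_rfl (h_ultra x1 y2 x2))
        rw [h_symm y1 x1] at hb
        rcases le_max_iff.mp hb with h2 | h2
        · exact le_max_of_le_left h2
        · rcases le_max_iff.mp h2 with h3 | h3
          · linarith
          · exact le_max_of_le_right h3
      · rw [max_eq_left h1.le]
        have hb : d x1 x2 ≤ max (d x1 y1) (max (d y1 y2) (d y2 x2)) :=
          (h_ultra x1 x2 y1).trans (max_le_max le_rfl (h_ultra y1 x2 y2))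
        rw [h_symm y2 x2] at hb
        rcases le_max_iff.mp hb with h2 | h2
        · exact le_max_of_le_left h2
        · rcases le_max_iff.mp h2 with h3 | h3
          · linarith
          · exact le_max_of_le_right h3
  intro p ε hε
  refine ⟨{q : X × X | d p.1 q.1 < ε ∧ d p.2 q.2 < ε}, ?_, ?_, ?_⟩
  · have c1 : Continuous fun q : X × X => d p.1 q.1 :=
      h_cont.comp (continuous_const.prodMk continuous_fst)
    have c2 : Continuous fun q : X × X => d p.2 q.2 :=
      h_cont.comp (continuous_const.prodMk continuous_snd)
    exact (isOpen_lt c1 continuous_const).inter (isOpen_lt c2 continuous_const)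
  · simp [h_refl, hε]
  · intro q hq
    exact lt_of_le_of_lt (key p.1 p.2 q.1 q.2) (max_lt hq.1 hq.2)
end

section
/- Let X be a compact topological space, R a range set, and d a continuous R-valued pseudo-ultrametric on X. Then the image of d is a tenuous subset of [0,∞): it is finite or consists of 0 together with a strictly decreasing positive sequence converging to 0. -/
/-!
By compactness, `X` is covered by the sets `{y | d x y < ε}` with `x` in a finite set `t`. In a
pseudo-ultrametric every triangle is isosceles with a short base, so a value `d x y ≥ ε` equals
`d i j` for the centres `i, j ∈ t` near `x` and `y`: only finitely many values are `≥ ε`.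
A set of nonnegative reals with finite tails is either finite or, with the reversed order,
order-isomorphic to `ℕ`, which lists its positive elements as a decreasing sequence.
-/

open Set Filter

theorem Set.Infinite.exists_strictMono_range_eq_of_finite_inter_Iic {α : Type*} [LinearOrder α]
    {S : Set α} (hS : S.Infinite) (hIic : ∀ x ∈ S, (S ∩ Iic x).Finite) :
    ∃ f : ℕ → α, StrictMono f ∧ range f = S := by
  have hIic_sub : ∀ x : S, (Iic x).Finite := fun x =>
    ((hIic x x.2).preimage Subtype.val_injective.injOn).subset fun y hy => ⟨y.2, hy⟩
  let _ : LocallyFiniteOrder S :=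
    LocallyFiniteOrder.ofFiniteIcc fun a b => (hIic_sub b).subset Icc_subset_Iic_self
  let _ := LinearLocallyFiniteOrder.succOrder S
  let _ := LinearLocallyFiniteOrder.predOrder S
  have : NoMaxOrder S := ⟨fun x => by
    by_contra! h
    exact hS (((hIic_sub x).image Subtype.val).subset fun y hy => ⟨⟨y, hy⟩, h _, rfl⟩)⟩
  let x₀ : S := ⟨_, hS.nonempty.some_mem⟩
  obtain ⟨b, hb⟩ := (hIic_sub x₀).exists_minimal nonempty_Iic
  let _ : OrderBot S :=
    { bot := b
      bot_le := fun y => (le_total y x₀).elim (fun hy => (le_total b y).elim id (hb.le_of_le hy))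
        fun hy => hb.prop.trans hy }
  let e := orderIsoNatOfLinearSuccPredArch (ι := S)
  refine ⟨fun n => e.symm n, fun m n h => e.symm.strictMono h, ?_⟩
  ext x
  exact ⟨by rintro ⟨n, rfl⟩; exact (e.symm n).2, fun hx => ⟨e ⟨x, hx⟩, by simp⟩⟩

theorem tenuous_of_finite_inter_Ici {K : Set ℝ} (hK : K ⊆ Ici 0) (h0 : 0 ∈ K)
    (hfin : ∀ ε > 0, (K ∩ Ici ε).Finite) : Tenuous K := by
  by_cases hKfin : K.Finite
  · exact Or.inl hKfin
  set P := K ∩ Ioi 0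
  have hK_eq : K = {0} ∪ P := by
    ext v
    refine ⟨fun hv => (hK hv).eq_or_lt'.imp id (⟨hv, ·⟩), ?_⟩
    rintro (rfl | hv)
    exacts [h0, hv.1]
  have hP : P.Infinite := fun hP => hKfin (hK_eq ▸ (finite_singleton 0).union hP)
  obtain ⟨f, hf, hfP⟩ := hP.exists_strictMono_range_eq_of_finite_inter_Iic (α := ℝᵒᵈ)
    fun x hx => (hfin _ hx.2).subset fun y hy => ⟨hy.1.1, hy.2⟩
  let a : ℕ → ℝ := fun n => OrderDual.ofDual (f n)
  have ha_mem : ∀ n, a n ∈ P := fun n => hfP ▸ mem_range_self n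
  refine Or.inr ⟨a, fun m n h => hf h, fun n => (ha_mem n).2, ?_, hK_eq.trans ?_⟩
  · refine tendsto_order.2
      ⟨fun ε hε => .of_forall fun n => hε.trans (ha_mem n).2, fun ε hε => ?_⟩
    rw [← Nat.cofinite_eq_atTop, eventually_cofinite]
    simp only [not_lt]
    exact ((hfin ε hε).preimage hf.injective.injOn).subset fun n hn => ⟨(ha_mem n).1, hn⟩
  · exact congrArg _ hfP.symm

section PseudoUltrametric

variable {X : Type*}

theorem nonneg_of_ultra {d : X → X → ℝ} (h_refl : ∀ x, d x x = 0)
    (h_symm : ∀ x y, d x y = d y x) (h_ultra : ∀ x y z, d x y ≤ max (d x z) (d z y))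
    (x y : X) : 0 ≤ d x y := by
  simpa [h_refl, h_symm y x] using h_ultra x x y

theorem eq_of_lt_of_ultra {d : X → X → ℝ} (h_symm : ∀ x y, d x y = d y x)
    (h_ultra : ∀ x y z, d x y ≤ max (d x z) (d z y)) {x x' y : X} (h : d x x' < d x y) :
    d x' y = d x y := by
  refine le_antisymm ?_ ?_
  · simpa [h_symm x' x, h.le] using h_ultra x' y x
  · simpa [h.not_ge] using h_ultra x y x'

theorem finite_range_inter_Ici_of_ultra [TopologicalSpace X] [CompactSpace X]
    {d : X → X → ℝ} (h_refl : ∀ x, d x x = 0) (h_symm : ∀ x y, d x y = d y x)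
    (h_ultra : ∀ x y z, d x y ≤ max (d x z) (d z y))
    (h_cont : Continuous fun p : X × X => d p.1 p.2) {ε : ℝ} (hε : 0 < ε) :
    (range (fun p : X × X => d p.1 p.2) ∩ Ici ε).Finite := by
  obtain ⟨t, ht⟩ := isCompact_univ.elim_finite_subcover (fun x : X => {y | d x y < ε})
    (fun x => isOpen_lt (h_cont.comp (Continuous.prodMk_right x)) continuous_const)
    (fun x _ => mem_iUnion.2 ⟨x, by simpa [h_refl] using hε⟩)
  have h_center : ∀ x, ∃ i ∈ t, d x i < ε := fun x => by
    simpa [h_symm x] using ht (mem_univ x)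
  refine (((t ×ˢ t : Finset (X × X)).finite_toSet).image fun p => d p.1 p.2).subset ?_
  rintro _ ⟨⟨⟨x, y⟩, rfl⟩, hxy⟩
  obtain ⟨i, hi, hxi⟩ := h_center x
  obtain ⟨j, hj, hyj⟩ := h_center y
  have hiy : d i y = d x y := eq_of_lt_of_ultra h_symm h_ultra (hxi.trans_le hxy)
  have hji : d j i = d y i := eq_of_lt_of_ultra h_symm h_ultra
    (hyj.trans_le (by rw [← h_symm, hiy]; exact hxy))
  refine ⟨(i, j), by simp [hi, hj], ?_⟩
  change d i j = d x y
  rw [h_symm, hji, h_symm, hiy]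

end PseudoUltrametric

theorem stmt_16_general {X : Type*} [TopologicalSpace X] [CompactSpace X]
    (d : X → X → ℝ)
    (h_refl : ∀ x, d x x = 0)
    (h_symm : ∀ x y, d x y = d y x)
    (h_ultra : ∀ x y z, d x y ≤ max (d x z) (d z y))
    (h_cont : Continuous (fun p : X × X => d p.1 p.2)) :
    Tenuous (Set.range fun p : X × X => d p.1 p.2) := by
  rcases isEmpty_or_nonempty X with _ | ⟨⟨x⟩⟩
  · exact Or.inl (finite_range _)
  refine tenuous_of_finite_inter_Ici ?_ ⟨(x, x), h_refl x⟩ fun ε hε =>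
    finite_range_inter_Ici_of_ultra h_refl h_symm h_ultra h_cont hε
  rintro _ ⟨⟨y, z⟩, rfl⟩
  exact nonneg_of_ultra h_refl h_symm h_ultra y z

theorem stmt_16 {X : Type*} [TopologicalSpace X] [CompactSpace X]
    (R : Set ℝ) (hR : R ⊆ Set.Ici (0 : ℝ)) (h0 : (0 : ℝ) ∈ R)
    (d : X → X → ℝ)
    (hdR : ∀ x y, d x y ∈ R)
    (h_refl : ∀ x, d x x = 0)
    (h_symm : ∀ x y, d x y = d y x)
    (h_ultra : ∀ x y z, d x y ≤ max (d x z) (d z y))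
    (h_cont : Continuous (fun p : X × X => d p.1 p.2)) :
    Tenuous (Set.range fun p : X × X => d p.1 p.2) :=
  stmt_16_general d h_refl h_symm h_ultra h_cont
end

section
/- Let X be a compact space and R a range set. The space UM(X,R) of continuous R-valued pseudo-ultrametrics on X, equipped with the ultrametric UD(d,e) = inf{ε : d(x,y) ≤ max(e(x,y), ε) and e(x,y) ≤ max(d(x,y), ε) for all x,y ∈ X}, is a complete metric space. -/
/-- Continuous `R`-valued pseudo-ultrametrics on `X`. -/
structure IsContPseudoUltrametric {X : Type*} [TopologicalSpace X]
    (R : Set ℝ) (d : X → X → ℝ) : Prop where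
  mem : ∀ x y, d x y ∈ R
  nonneg : ∀ x y, 0 ≤ d x y
  refl : ∀ x, d x x = 0
  symm : ∀ x y, d x y = d y x
  ultra : ∀ x y z, d x y ≤ max (d x z) (d z y)
  cont : Continuous fun p : X × X => d p.1 p.2

/-- The ultrametric `UD` on the space of continuous pseudo-ultrametrics. -/
noncomputable def UD {X : Type*} (d e : X → X → ℝ) : ℝ :=
  sInf {ε : ℝ | 0 ≤ ε ∧ ∀ x y : X, d x y ≤ max (e x y) ε ∧ e x y ≤ max (d x y) ε}

/-
Closeness in `UD` below `ε` says that at every pair of points the two values agree as soon as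
one of them exceeds `ε`, and both lie in `[0, ε]` otherwise. Hence a `UD`-Cauchy sequence is
uniformly Cauchy, so it converges uniformly to a continuous limit `e`; the pointwise conditions
are closed, so they survive in the limit, giving `UD (d n) e → 0`. Above every level `ε > 0` the
values of `e` are eventually values of `d n`, which is why `e` still takes values in `R`.
-/

open Filter Topology Set

/-- The condition in the definition of `UD`, at a single pair of values. -/
def MaxClose {α : Type*} [LinearOrder α] (ε a b : α) : Prop :=
  a ≤ max b ε ∧ b ≤ max a ε

namespace MaxClose

section LinearOrder

variable {α : Type*} [LinearOrder α] {ε ε' a b : α}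

theorem symm (h : MaxClose ε a b) : MaxClose ε b a :=
  ⟨h.2, h.1⟩

theorem mono (h : MaxClose ε a b) (hε : ε ≤ ε') : MaxClose ε' a b :=
  ⟨h.1.trans (max_le_max le_rfl hε), h.2.trans (max_le_max le_rfl hε)⟩

theorem eq_of_lt (h : MaxClose ε a b) (ha : ε < a) : a = b := by
  have hab : a ≤ b := by
    rcases le_max_iff.1 h.1 with h' | h'
    · exact h'
    · exact absurd h' (not_le.2 ha)
  exact hab.antisymm (le_max_iff.1 h.2 |>.resolve_right (not_le.2 (ha.trans_le hab)))

theorem of_tendsto [TopologicalSpace α] [OrderClosedTopology α] {ι : Type*} {l : Filter ι}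
    [l.NeBot] {u : ι → α} (hu : Tendsto u l (𝓝 a)) (h : ∀ᶠ i in l, MaxClose ε (u i) b) :
    MaxClose ε a b :=
  ⟨le_of_tendsto hu (h.mono fun _ hi => hi.1),
    ge_of_tendsto (hu.max tendsto_const_nhds) (h.mono fun _ hi => hi.2)⟩

end LinearOrder

theorem abs_sub_le {α : Type*} [AddCommGroup α] [LinearOrder α] [IsOrderedAddMonoid α]
    {ε a b : α} (h : MaxClose ε a b) (hε : 0 ≤ ε) (ha : 0 ≤ a) (hb : 0 ≤ b) :
    |a - b| ≤ ε := by
  rcases lt_or_ge ε a with hεa | haε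
  · rw [h.eq_of_lt hεa, sub_self, abs_zero]
    exact hε
  rcases lt_or_ge ε b with hεb | hbε
  · rw [h.symm.eq_of_lt hεb, sub_self, abs_zero]
    exact hε
  rw [abs_sub_le_iff]
  constructor <;>
  · rw [sub_le_iff_le_add]
    exact le_add_of_le_of_nonneg ‹_› ‹_›

end MaxClose

section UD

variable {X : Type*} {d e : X → X → ℝ} {ε : ℝ}

theorem UD_le (hε : 0 ≤ ε) (h : ∀ x y, MaxClose ε (d x y) (e x y)) : UD d e ≤ ε :=
  csInf_le ⟨0, fun _ hδ => hδ.1⟩ ⟨hε, h⟩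

theorem maxClose_of_UD_lt (hd : BddAbove (range (Function.uncurry d)))
    (he : BddAbove (range (Function.uncurry e))) (h : UD d e < ε) :
    ∀ x y, MaxClose ε (d x y) (e x y) := by
  obtain ⟨C, hC⟩ := hd
  obtain ⟨C', hC'⟩ := he
  have hne : {δ : ℝ | 0 ≤ δ ∧ ∀ x y, MaxClose δ (d x y) (e x y)}.Nonempty := by
    refine ⟨max 0 (max C C'), le_max_left _ _, fun x y => ⟨?_, ?_⟩⟩
    · exact le_max_of_le_right <| le_max_of_le_right <| le_max_of_le_left <| hC ⟨(x, y), rfl⟩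
    · exact le_max_of_le_right <| le_max_of_le_right <| le_max_of_le_right <| hC' ⟨(x, y), rfl⟩
  obtain ⟨δ, ⟨-, hδ⟩, hδε⟩ := (csInf_lt_iff ⟨0, fun _ hδ => hδ.1⟩ hne).1 h
  exact fun x y => (hδ x y).mono hδε.le

end UD

theorem UniformCauchySeqOn.exists_continuous_tendsto {ι α β : Type*} [Nonempty ι]
    [SemilatticeSup ι] [TopologicalSpace α] [UniformSpace β] [CompleteSpace β] {F : ι → α → β}
    (hF : UniformCauchySeqOn F atTop univ) (hc : ∀ i, Continuous (F i)) :
    ∃ f : α → β, Continuous f ∧ ∀ x, Tendsto (fun i => F i x) atTop (𝓝 (f x)) := by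
  choose f hf using fun x => cauchySeq_tendsto_of_complete (hF.cauchySeq (mem_univ x))
  have hunif : TendstoUniformly F f atTop :=
    tendstoUniformlyOn_univ.1 (hF.tendstoUniformlyOn_of_tendsto fun x _ => hf x)
  exact ⟨f, hunif.continuous (Frequently.of_forall hc), hf⟩

theorem uniformCauchySeqOn_of_maxClose {Y : Type*} {f : ℕ → Y → ℝ} (hf : ∀ n y, 0 ≤ f n y)
    (h : ∀ ε > 0, ∃ N, ∀ m ≥ N, ∀ n ≥ N, ∀ y, MaxClose ε (f m y) (f n y)) :
    UniformCauchySeqOn f atTop univ := by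
  refine Metric.uniformCauchySeqOn_iff.2 fun ε hε => ?_
  obtain ⟨N, hN⟩ := h (ε / 2) (half_pos hε)
  refine ⟨N, fun m hm n hn y _ => ?_⟩
  rw [Real.dist_eq]
  exact ((hN m hm n hn y).abs_sub_le (half_pos hε).le (hf m y) (hf n y)).trans_lt
    (half_lt_self hε)

theorem IsContPseudoUltrametric.of_tendsto {X : Type*} [TopologicalSpace X] {R : Set ℝ}
    {d : ℕ → X → X → ℝ} {e : X → X → ℝ} (hd : ∀ n, IsContPseudoUltrametric R (d n))
    (he : Continuous fun p : X × X => e p.1 p.2)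
    (hlim : ∀ x y, Tendsto (fun n => d n x y) atTop (𝓝 (e x y)))
    (hclose : ∀ ε > 0, ∃ N, ∀ n ≥ N, ∀ x y, MaxClose ε (d n x y) (e x y)) :
    IsContPseudoUltrametric R e where
  mem x y := by
    rcases (ge_of_tendsto' (hlim x y) fun n => (hd n).nonneg x y).eq_or_lt with h | h
    · rw [← h, ← (hd 0).refl x]
      exact (hd 0).mem x x
    · obtain ⟨N, hN⟩ := hclose (e x y / 2) (half_pos h)
      rw [(hN N le_rfl x y).symm.eq_of_lt (half_lt_self h)]
      exact (hd N).mem x y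
  nonneg x y := ge_of_tendsto' (hlim x y) fun n => (hd n).nonneg x y
  refl x := tendsto_nhds_unique (hlim x x) (by simp only [(hd _).refl, tendsto_const_nhds])
  symm x y := tendsto_nhds_unique (hlim x y) (by simpa only [(hd _).symm y x] using hlim y x)
  ultra x y z :=
    le_of_tendsto_of_tendsto' (hlim x y) ((hlim x z).max (hlim z y)) fun n => (hd n).ultra x y z
  cont := he

theorem stmt_17_general {X : Type*} [TopologicalSpace X] [CompactSpace X]
    (R : Set ℝ)
    (d : ℕ → X → X → ℝ)
    (hd : ∀ n, IsContPseudoUltrametric R (d n))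
    (hCauchy : ∀ ε > (0 : ℝ), ∃ N, ∀ m ≥ N, ∀ n ≥ N, UD (d m) (d n) < ε) :
    ∃ e : X → X → ℝ, IsContPseudoUltrametric R e ∧
      ∀ ε > (0 : ℝ), ∃ N, ∀ n ≥ N, UD (d n) e < ε := by
  have hbdd : ∀ n, BddAbove (range (Function.uncurry (d n))) :=
    fun n => (isCompact_range (hd n).cont).bddAbove
  have hclose : ∀ ε > 0, ∃ N, ∀ m ≥ N, ∀ n ≥ N, ∀ x y, MaxClose ε (d m x y) (d n x y) :=
    fun ε hε => (hCauchy ε hε).imp fun N hN m hm n hn =>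
      maxClose_of_UD_lt (hbdd m) (hbdd n) (hN m hm n hn)
  have hunif : UniformCauchySeqOn (fun n (p : X × X) => d n p.1 p.2) atTop univ :=
    uniformCauchySeqOn_of_maxClose (fun n p => (hd n).nonneg p.1 p.2) fun ε hε =>
      (hclose ε hε).imp fun N hN m hm n hn p => hN m hm n hn p.1 p.2
  obtain ⟨e, he, hlim⟩ := hunif.exists_continuous_tendsto fun n => (hd n).cont
  have hclose_lim : ∀ ε > 0, ∃ N, ∀ n ≥ N, ∀ x y, MaxClose ε (d n x y) (e (x, y)) :=
    fun ε hε => (hclose ε hε).imp fun N hN n hn x y =>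
      (MaxClose.of_tendsto (hlim (x, y)) ((eventually_ge_atTop N).mono fun m hm =>
        hN m hm n hn x y)).symm
  refine ⟨fun x y => e (x, y),
    IsContPseudoUltrametric.of_tendsto hd he (fun x y => hlim (x, y)) hclose_lim,
    fun ε hε => ?_⟩
  obtain ⟨N, hN⟩ := hclose_lim (ε / 2) (half_pos hε)
  exact ⟨N, fun n hn => (UD_le (half_pos hε).le (hN n hn)).trans_lt (half_lt_self hε)⟩

/-- The space `UM(X,R)` of continuous `R`-valued pseudo-ultrametrics on a
compact space `X`, with the ultrametric `UD`, is complete. -/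
theorem stmt_17 {X : Type*} [TopologicalSpace X] [CompactSpace X]
    (R : Set ℝ) (hR : R ⊆ Set.Ici (0 : ℝ)) (h0 : (0 : ℝ) ∈ R)
    (d : ℕ → X → X → ℝ)
    (hd : ∀ n, IsContPseudoUltrametric R (d n))
    (hCauchy : ∀ ε > (0 : ℝ), ∃ N, ∀ m ≥ N, ∀ n ≥ N, UD (d m) (d n) < ε) :
    ∃ e : X → X → ℝ, IsContPseudoUltrametric R e ∧
      ∀ ε > (0 : ℝ), ∃ N, ∀ n ≥ N, UD (d n) e < ε :=
  stmt_17_general R d hd hCauchy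
end

section
/- Let C be a class of finite ultrametric spaces. An ultrametric space (X,d) is C-injective if and only if it satisfies the following property: for every finite ultrametric space (A ⊔ {ω}, e) in C, every isometric embedding φ: A → X, and every point p ∈ A with e(p,ω) = min_{a∈A} e(a,ω), there exists q ∈ X such that for all a ∈ A with e(a,ω) = e(p,ω), one has d(φ(a), q) = e(a,ω). -/
/-- `e` is an ultrametric on the type `A`. -/
structure IsUltrametricOn {A : Type*} (e : A → A → ℝ) : Prop where
  nonneg : ∀ x y, 0 ≤ e x y
  refl : ∀ x, e x x = 0
  eq_of : ∀ x y, e x y = 0 → x = y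
  symm : ∀ x y, e x y = e y x
  ultra : ∀ x y z, e x y ≤ max (e x z) (e z y)

/-- A class `C` of finite ultrametric spaces, each of the form
`(A ⊔ {ω}, e)` with `A = Fin (n+1)` nonempty and `ω` the extra point. An
ultrametric space `X` is `C`-injective (i.e., has the one-point extension
property for `C`) if and only if it satisfies property (Ex). -/
theorem stmt_18 {X : Type*} [MetricSpace X] [IsUltrametricDist X]
    (C : ∀ n : ℕ, ((Fin (n + 1) ⊕ Unit) → (Fin (n + 1) ⊕ Unit) → ℝ) → Prop)
    (hC : ∀ n e, C n e → IsUltrametricOn e) :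
    -- `X` is `C`-injective: the one-point extension property for `C`
    (∀ n e, C n e → ∀ φ : Fin (n + 1) → X,
        (∀ i j, dist (φ i) (φ j) = e (Sum.inl i) (Sum.inl j)) →
        ∃ q : X, ∀ i, dist (φ i) q = e (Sum.inl i) (Sum.inr ()))
    ↔
    -- property (Ex)
    (∀ n e, C n e → ∀ φ : Fin (n + 1) → X,
        (∀ i j, dist (φ i) (φ j) = e (Sum.inl i) (Sum.inl j)) →
        ∀ p : Fin (n + 1),
          (∀ a, e (Sum.inl p) (Sum.inr ()) ≤ e (Sum.inl a) (Sum.inr ())) →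
          ∃ q : X, ∀ a, e (Sum.inl a) (Sum.inr ()) = e (Sum.inl p) (Sum.inr ()) →
            dist (φ a) q = e (Sum.inl a) (Sum.inr ())) := by
  constructor
  · intro H n e hCe φ hφ p hp
    obtain ⟨q, hq⟩ := H n e hCe φ hφ
    exact ⟨q, fun a _ => hq a⟩
  · intro H n e hCe φ hφ
    obtain ⟨p, -, hp⟩ := Finset.exists_min_image Finset.univ
      (fun a => e (Sum.inl a) (Sum.inr ())) ⟨0, Finset.mem_univ 0⟩
    obtain ⟨q, hq⟩ := H n e hCe φ hφ p (fun a => hp a (Finset.mem_univ a))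
    refine ⟨q, fun a => ?_⟩
    rcases eq_or_lt_of_le (hp a (Finset.mem_univ a)) with heq | hlt
    · exact hq a heq.symm
    · -- e p ω < e a ω
      have U := hC n e hCe
      have hap : e (Sum.inl a) (Sum.inl p) = e (Sum.inl a) (Sum.inr ()) := by
        have h1 : e (Sum.inl a) (Sum.inl p) ≤ max (e (Sum.inl a) (Sum.inr ())) (e (Sum.inr ()) (Sum.inl p)) :=
          U.ultra _ _ _
        have h2 : e (Sum.inl a) (Sum.inr ()) ≤ max (e (Sum.inl a) (Sum.inl p)) (e (Sum.inl p) (Sum.inr ())) :=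
          U.ultra _ _ _
        have hs : e (Sum.inr ()) (Sum.inl p) = e (Sum.inl p) (Sum.inr ()) := U.symm _ _
        rw [hs] at h1
        rcases le_max_iff.mp h2 with h | h
        · rcases le_max_iff.mp h1 with h' | h'
          · linarith
          · linarith
        · linarith
      have hdpq : dist (φ p) q = e (Sum.inl p) (Sum.inr ()) := hq p rfl
      have hdap : dist (φ a) (φ p) = e (Sum.inl a) (Sum.inr ()) := by
        rw [hφ a p, hap]
      have u1 : dist (φ a) q ≤ max (dist (φ a) (φ p)) (dist (φ p) q) :=
        IsUltrametricDist.dist_triangle_max _ _ _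
      have u2 : dist (φ a) (φ p) ≤ max (dist (φ a) q) (dist q (φ p)) :=
        IsUltrametricDist.dist_triangle_max _ _ _
      rw [dist_comm q (φ p)] at u2
      rw [hdap] at u1 u2
      rcases le_max_iff.mp u2 with h | h
      · rcases le_max_iff.mp u1 with h' | h'
        · linarith
        · linarith
      · linarith
end
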